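/- Let h : ℝ → ℝ be smooth with h(0) = 0 and h'(0) = 0 (a boundary curve given locally as the graph x₂ = h(x₁), tangent to the horizontal axis at the origin), let σ : ℝ → ℝ be smooth with compact support, and fix c ≥ 0. For δ > 0, define the local single layer heat potential at the target point (0, c√δ) by S_L(δ) = ∫_0^δ ∫_ℝ exp(-(ξ² + (c√δ - h(ξ))²)/(4t))/(4πt) · σ(ξ)·√(1 + h'(ξ)²) dξ dt. Then there exist constants C > 0 and δ₀ > 0 such that for all 0 < δ ≤ δ₀, | S_L(δ) - √δ·(σ(0)/2)·( (2/√π)·exp(-c²/4) - c·erfc(c/2) ) | ≤ C·δ. -/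

import Mathlib

open MeasureTheory Real Filter Set Topology
/-- The complementary error function `erfc(x) = (2/√π) ∫_x^∞ e^{-u²} du`. -/
noncomputable def erfc (x : ℝ) : ℝ :=
  (2 / Real.sqrt Real.pi) * ∫ u in Set.Ioi x, Real.exp (-u ^ 2)

namespace SLaux

noncomputable def Er (y : ℝ) : ℝ := ∫ u in Set.Ioi y, Real.exp (-u ^ 2)

lemma erfc_eq (x : ℝ) : erfc x = 2 / Real.sqrt Real.pi * Er x := rfl

lemma integrable_exp_neg_sq : Integrable (fun u : ℝ => Real.exp (-u ^ 2)) := by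
  simpa using integrable_exp_neg_mul_sq (by norm_num : (0:ℝ) < 1)

lemma Er_eq (y : ℝ) : Er y = Er 0 - ∫ u in (0:ℝ)..y, Real.exp (-u ^ 2) := by
  have h1 : ∫ u in (0:ℝ)..y, Real.exp (-u ^ 2)
      = (∫ u in Iic y, Real.exp (-u ^ 2)) - ∫ u in Iic (0:ℝ), Real.exp (-u ^ 2) :=
    (intervalIntegral.integral_Iic_sub_Iic integrable_exp_neg_sq.integrableOn
      integrable_exp_neg_sq.integrableOn).symm
  have h2 : ∀ z : ℝ, (∫ u in Iic z, Real.exp (-u ^ 2)) + Er z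
      = ∫ u : ℝ, Real.exp (-u ^ 2) := by
    intro z
    rw [Er, ← setIntegral_union (Iic_disjoint_Ioi le_rfl) measurableSet_Ioi
      integrable_exp_neg_sq.integrableOn integrable_exp_neg_sq.integrableOn,
      Iic_union_Ioi, setIntegral_univ]
  have := h2 y
  have h0 := h2 0
  rw [h1]
  linarith

lemma Er_hasDerivAt (y : ℝ) : HasDerivAt Er (-Real.exp (-y ^ 2)) y := by
  have : HasDerivAt (fun z => ∫ u in (0:ℝ)..z, Real.exp (-u ^ 2)) (Real.exp (-y ^ 2)) y :=
    intervalIntegral.integral_hasDerivAt_right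
      ((Real.continuous_exp.comp (by continuity)).intervalIntegrable _ _)
      ((Real.continuous_exp.comp (by continuity)).stronglyMeasurableAtFilter _ _)
      (Real.continuous_exp.comp (by continuity)).continuousAt
  have h := (hasDerivAt_const y (Er 0)).sub this
  simp only [zero_sub] at h
  exact h.congr_of_eventuallyEq (Eventually.of_forall fun z => Er_eq z)

lemma Er_tendsto_zero : Tendsto Er atTop (𝓝 0) := by
  have h1 : Tendsto (fun y : ℝ => ∫ u in (0:ℝ)..y, Real.exp (-u ^ 2)) atTop (𝓝 (Er 0)) :=
    intervalIntegral_tendsto_integral_Ioi 0 integrable_exp_neg_sq.integrableOn tendsto_id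
  have h2 : Tendsto (fun y : ℝ => Er 0 - ∫ u in (0:ℝ)..y, Real.exp (-u ^ 2)) atTop
      (𝓝 (Er 0 - Er 0)) := (tendsto_const_nhds.sub h1)
  simpa [← Er_eq] using h2

lemma exp_neg_diff_le {x y : ℝ} (hx : 0 ≤ x) (hy : 0 ≤ y) :
    |Real.exp (-x) - Real.exp (-y)| ≤ |x - y| := by
  rcases le_total x y with hxy | hxy
  · have h1 := Real.add_one_le_exp (x - y)
    have h2 : Real.exp (-y) = Real.exp (x - y) * Real.exp (-x) := by
      rw [← Real.exp_add]; ring_nf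
    have h3 : Real.exp (-x) ≤ 1 := Real.exp_le_one_iff.mpr (by linarith)
    have h4 : 0 ≤ Real.exp (-x) := Real.exp_nonneg _
    have h5 : Real.exp (-y) ≤ Real.exp (-x) := Real.exp_le_exp.mpr (by linarith)
    rw [abs_of_nonneg (by linarith), abs_of_nonpos (by linarith)]
    nlinarith [mul_le_mul_of_nonneg_right h1 h4]
  · have h1 := Real.add_one_le_exp (y - x)
    have h2 : Real.exp (-x) = Real.exp (y - x) * Real.exp (-y) := by
      rw [← Real.exp_add]; ring_nf
    have h3 : Real.exp (-y) ≤ 1 := Real.exp_le_one_iff.mpr (by linarith)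
    have h4 : 0 ≤ Real.exp (-y) := Real.exp_nonneg _
    have h5 : Real.exp (-x) ≤ Real.exp (-y) := Real.exp_le_exp.mpr (by linarith)
    rw [abs_of_nonpos (by linarith), abs_of_nonneg (by linarith)]
    nlinarith [mul_le_mul_of_nonneg_right h1 h4]

lemma exp_neg_diff_le' {m x y : ℝ} (hx : m ≤ x) (hy : m ≤ y) (hm : 0 ≤ m) :
    |Real.exp (-x) - Real.exp (-y)| ≤ Real.exp (-m) * |x - y| := by
  have h1 : Real.exp (-x) = Real.exp (-m) * Real.exp (-(x - m)) := by
    rw [← Real.exp_add]; ring_nf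
  have h2 : Real.exp (-y) = Real.exp (-m) * Real.exp (-(y - m)) := by
    rw [← Real.exp_add]; ring_nf
  have h3 := exp_neg_diff_le (sub_nonneg.mpr hx) (sub_nonneg.mpr hy)
  have h4 : |x - m - (y - m)| = |x - y| := by ring_nf
  calc |Real.exp (-x) - Real.exp (-y)|
      = Real.exp (-m) * |Real.exp (-(x - m)) - Real.exp (-(y - m))| := by
        rw [h1, h2, ← mul_sub, abs_mul, abs_of_nonneg (Real.exp_nonneg _)]
    _ ≤ Real.exp (-m) * |x - y| := by
        rw [← h4]; exact mul_le_mul_of_nonneg_left h3 (Real.exp_nonneg _)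

lemma mul_exp_neg_le_one {s : ℝ} (hs : 0 ≤ s) : s * Real.exp (-s) ≤ 1 := by
  have h1 : s ≤ Real.exp s := by linarith [Real.add_one_le_exp s]
  have h2 : Real.exp (-s) = (Real.exp s)⁻¹ := Real.exp_neg s
  rw [h2, ← div_eq_mul_inv]
  exact div_le_one_of_le₀ h1 (Real.exp_nonneg s)

lemma sqrt_mul_exp_neg_le_one {s : ℝ} (hs : 0 ≤ s) : Real.sqrt s * Real.exp (-s) ≤ 1 := by
  have h1 : Real.sqrt s ≤ Real.exp s := by
    rcases le_total s 1 with h | h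
    · calc Real.sqrt s ≤ 1 := by
            rw [show (1:ℝ) = Real.sqrt 1 by simp]; exact Real.sqrt_le_sqrt h
        _ ≤ Real.exp s := Real.one_le_exp hs
    · calc Real.sqrt s ≤ s := by
            rw [Real.sqrt_le_left (by linarith : (0:ℝ) ≤ s)]; nlinarith
        _ ≤ Real.exp s := by linarith [Real.add_one_le_exp s]
  rw [Real.exp_neg, ← div_eq_mul_inv]
  exact div_le_one_of_le₀ h1 (Real.exp_nonneg s)

lemma sq_mul_exp_neg_le_four {s : ℝ} (hs : 0 ≤ s) : s ^ 2 * Real.exp (-s) ≤ 4 := by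
  have h1 : s / 2 * Real.exp (-(s / 2)) ≤ 1 := mul_exp_neg_le_one (by linarith)
  have h2 : Real.exp (-s) = Real.exp (-(s / 2)) * Real.exp (-(s / 2)) := by
    rw [← Real.exp_add]; ring_nf
  have h3 : 0 ≤ s / 2 * Real.exp (-(s / 2)) := by positivity
  nlinarith


lemma gauss_integral {b : ℝ} (hb : 0 < b) :
    (∫ ξ : ℝ, Real.exp (-ξ ^ 2 / b)) = Real.sqrt (Real.pi * b) := by
  have h1 : ∀ ξ : ℝ, Real.exp (-ξ ^ 2 / b) = Real.exp (-(1 / b) * ξ ^ 2) := by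
    intro ξ; congr 1; field_simp
  simp_rw [h1]
  rw [integral_gaussian]
  congr 1
  field_simp

lemma gauss_integrable {b : ℝ} (hb : 0 < b) :
    Integrable (fun ξ : ℝ => Real.exp (-ξ ^ 2 / b)) := by
  have h1 : ∀ ξ : ℝ, Real.exp (-ξ ^ 2 / b) = Real.exp (-(1 / b) * ξ ^ 2) := by
    intro ξ; congr 1; field_simp
  simp_rw [h1]
  exact integrable_exp_neg_mul_sq (by positivity)

-- moment bounds against the wider Gaussian
lemma H1 {t : ℝ} (ht : 0 < t) (ξ : ℝ) :
    |ξ| * Real.exp (-ξ ^ 2 / (8 * t)) ≤ 4 * Real.sqrt t * Real.exp (-ξ ^ 2 / (16 * t)) := by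
  set s : ℝ := ξ ^ 2 / (16 * t) with hs_def
  have hs : 0 ≤ s := by positivity
  have key := sqrt_mul_exp_neg_le_one hs
  have habs : |ξ| = 4 * Real.sqrt t * Real.sqrt s := by
    have h16 : Real.sqrt (16 * t) = 4 * Real.sqrt t := by
      rw [Real.sqrt_mul (by norm_num : (0:ℝ) ≤ 16) t,
        show (16:ℝ) = 4 ^ 2 by norm_num, Real.sqrt_sq (by norm_num : (0:ℝ) ≤ 4)]
    rw [hs_def, Real.sqrt_div (by positivity : (0:ℝ) ≤ ξ ^ 2), Real.sqrt_sq_eq_abs, h16]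
    have hst : Real.sqrt t ≠ 0 := by positivity
    field_simp
  have hsplit : Real.exp (-ξ ^ 2 / (8 * t)) = Real.exp (-s) * Real.exp (-ξ ^ 2 / (16 * t)) := by
    rw [← Real.exp_add]; congr 1; rw [hs_def]; field_simp; ring
  have hexp16 : Real.exp (-ξ ^ 2 / (16 * t)) = Real.exp (-s) := by
    congr 1; rw [hs_def]; field_simp
  rw [habs, hsplit, hexp16]
  have h2 : Real.sqrt s * Real.exp (-s) * Real.exp (-s) ≤ Real.exp (-s) := by
    nlinarith [Real.exp_nonneg (-s), Real.exp_pos (-s)]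
  nlinarith [Real.sqrt_nonneg t, h2]


lemma H2 {t : ℝ} (ht : 0 < t) (ξ : ℝ) :
    ξ ^ 2 * Real.exp (-ξ ^ 2 / (8 * t)) ≤ 16 * t * Real.exp (-ξ ^ 2 / (16 * t)) := by
  set s : ℝ := ξ ^ 2 / (16 * t) with hs_def
  have hs : 0 ≤ s := by positivity
  have key := mul_exp_neg_le_one hs
  have hsq : ξ ^ 2 = 16 * t * s := by rw [hs_def]; field_simp
  have hsplit : Real.exp (-ξ ^ 2 / (8 * t)) = Real.exp (-s) * Real.exp (-ξ ^ 2 / (16 * t)) := by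
    rw [← Real.exp_add]; congr 1; rw [hs_def]; field_simp; ring
  have hexp16 : Real.exp (-ξ ^ 2 / (16 * t)) = Real.exp (-s) := by
    congr 1; rw [hs_def]; field_simp
  rw [hsplit, hexp16, hsq]
  have h2 : s * Real.exp (-s) * Real.exp (-s) ≤ Real.exp (-s) := by
    nlinarith [Real.exp_nonneg (-s), Real.exp_pos (-s)]
  nlinarith [le_of_lt ht, h2]

lemma H3 {t : ℝ} (ht : 0 < t) (ξ : ℝ) :
    ξ ^ 4 * Real.exp (-ξ ^ 2 / (8 * t)) ≤ 1024 * t ^ 2 * Real.exp (-ξ ^ 2 / (16 * t)) := by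
  set s : ℝ := ξ ^ 2 / (16 * t) with hs_def
  have hs : 0 ≤ s := by positivity
  have key := sq_mul_exp_neg_le_four hs
  have hsq : ξ ^ 4 = 256 * t ^ 2 * s ^ 2 := by rw [hs_def]; field_simp; ring
  have hsplit : Real.exp (-ξ ^ 2 / (8 * t)) = Real.exp (-s) * Real.exp (-ξ ^ 2 / (16 * t)) := by
    rw [← Real.exp_add]; congr 1; rw [hs_def]; field_simp; ring
  have hexp16 : Real.exp (-ξ ^ 2 / (16 * t)) = Real.exp (-s) := by
    congr 1; rw [hs_def]; field_simp
  rw [hsplit, hexp16, hsq]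
  have h2 : s ^ 2 * Real.exp (-s) * Real.exp (-s) ≤ 4 * Real.exp (-s) := by
    nlinarith [Real.exp_nonneg (-s), Real.exp_pos (-s)]
  nlinarith [sq_nonneg t, h2]

lemma exp_small {t : ℝ} (ht : 0 < t) : Real.exp (-(1 / (8 * t))) ≤ 8 * t := by
  have key := mul_exp_neg_le_one (le_of_lt (show (0:ℝ) < 1 / (8 * t) by positivity))
  have h8 : 0 < 8 * t := by linarith
  calc Real.exp (-(1 / (8 * t)))
      = 8 * t * (1 / (8 * t) * Real.exp (-(1 / (8 * t)))) := by field_simp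
    _ ≤ 8 * t * 1 := by
        exact mul_le_mul_of_nonneg_left key (le_of_lt h8)
    _ = 8 * t := by ring


lemma B'_intervalIntegrable {a δ : ℝ} (hδ : 0 < δ) :
    IntervalIntegrable (fun t => Real.exp (-a ^ 2 / (4 * t)) / (2 * Real.sqrt (Real.pi * t)))
      volume 0 δ := by
  rw [intervalIntegrable_iff_integrableOn_Ioc_of_le hδ.le]
  have hbnd : Integrable (fun t : ℝ => 1 / (2 * Real.sqrt Real.pi) * t ^ (-(1/2) : ℝ))
      (volume.restrict (Ioc 0 δ)) := by
    have h := intervalIntegral.intervalIntegrable_rpow'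
      (show (-1:ℝ) < -(1/2) by norm_num) (a := (0:ℝ)) (b := δ)
    rw [intervalIntegrable_iff_integrableOn_Ioc_of_le hδ.le] at h
    exact h.const_mul _
  apply Integrable.mono' hbnd
  · apply ContinuousOn.aestronglyMeasurable _ measurableSet_Ioc
    apply ContinuousOn.div
    · apply Real.continuous_exp.comp_continuousOn
      exact ContinuousOn.div continuousOn_const (by fun_prop)
        (fun x hx => by have := hx.1; positivity)
    · fun_prop
    · intro x hx
      have := hx.1
      have : 0 < Real.sqrt (Real.pi * x) := Real.sqrt_pos.mpr (by positivity)
      positivity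
  · filter_upwards [ae_restrict_mem measurableSet_Ioc] with x hx
    have hx0 : 0 < x := hx.1
    have hsx : 0 < Real.sqrt (Real.pi * x) := Real.sqrt_pos.mpr (by positivity)
    rw [Real.norm_eq_abs, abs_of_nonneg (by positivity)]
    have h1 : Real.exp (-a ^ 2 / (4 * x)) ≤ 1 :=
      Real.exp_le_one_iff.mpr (by rw [neg_div]; exact neg_nonpos.mpr (by positivity))
    have h2 : x ^ (-(1/2) : ℝ) = (Real.sqrt x)⁻¹ := by
      rw [Real.rpow_neg hx0.le, Real.sqrt_eq_rpow]
    have h3 : Real.sqrt (Real.pi * x) = Real.sqrt Real.pi * Real.sqrt x :=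
      Real.sqrt_mul Real.pi_pos.le x
    have hsqx : 0 < Real.sqrt x := Real.sqrt_pos.mpr hx0
    have hsqpi : 0 < Real.sqrt Real.pi := Real.sqrt_pos.mpr Real.pi_pos
    rw [h2, h3]
    rw [div_le_iff₀ (by positivity)]
    calc Real.exp (-a ^ 2 / (4 * x)) ≤ 1 := h1
      _ = 1 / (2 * Real.sqrt Real.pi) * (Real.sqrt x)⁻¹ * (2 * (Real.sqrt Real.pi * Real.sqrt x)) := by
          field_simp

lemma key_time_integral {a δ : ℝ} (ha : 0 ≤ a) (hδ : 0 < δ) :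
    (∫ t in (0:ℝ)..δ, Real.exp (-a ^ 2 / (4 * t)) / (2 * Real.sqrt (Real.pi * t)))
      = Real.sqrt δ * Real.exp (-a ^ 2 / (4 * δ)) / Real.sqrt Real.pi
        - a / Real.sqrt Real.pi * Er (a / (2 * Real.sqrt δ)) := by
  set G : ℝ → ℝ := fun u => Real.sqrt u * Real.exp (-a ^ 2 / (4 * u)) / Real.sqrt Real.pi
    - a / Real.sqrt Real.pi * Er (a / (2 * Real.sqrt u)) with hG_def
  have hsqpi : 0 < Real.sqrt Real.pi := Real.sqrt_pos.mpr Real.pi_pos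
  have hG : ∀ t : ℝ, 0 < t →
      HasDerivAt G (Real.exp (-a ^ 2 / (4 * t)) / (2 * Real.sqrt (Real.pi * t))) t := by
    intro t ht
    have hstp : 0 < Real.sqrt t := Real.sqrt_pos.mpr ht
    have hst : Real.sqrt t ≠ 0 := hstp.ne'
    have hsq : Real.sqrt t ^ 2 = t := Real.sq_sqrt ht.le
    have h4t : (4:ℝ) * t ≠ 0 := by positivity
    have h1 : HasDerivAt (fun u : ℝ => Real.sqrt u) (1 / (2 * Real.sqrt t)) t :=
      Real.hasDerivAt_sqrt ht.ne'
    have h2 : HasDerivAt (fun u : ℝ => -a ^ 2 / (4 * u)) (a ^ 2 / (4 * t ^ 2)) t := by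
      have hid : HasDerivAt (fun u : ℝ => 4 * u) 4 t := by
        simpa using (hasDerivAt_id t).const_mul (4:ℝ)
      have h := (hid.inv h4t).const_mul (-a ^ 2)
      have hfun : (fun u : ℝ => -a ^ 2 * (4 * u)⁻¹) = fun u : ℝ => -a ^ 2 / (4 * u) := by
        funext u; ring
      simp only [Pi.inv_apply] at h
      rw [hfun] at h
      refine h.congr_deriv ?_; symm
      field_simp
    have h3 : HasDerivAt (fun u : ℝ => Real.exp (-a ^ 2 / (4 * u)))
        (Real.exp (-a ^ 2 / (4 * t)) * (a ^ 2 / (4 * t ^ 2))) t := h2.exp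
    have h4 : HasDerivAt (fun u : ℝ => a / (2 * Real.sqrt u))
        (-(a / (4 * t * Real.sqrt t))) t := by
      have h := (h1.inv hst).const_mul (a / 2)
      have hfun : (fun u : ℝ => a / 2 * (Real.sqrt u)⁻¹) = fun u : ℝ => a / (2 * Real.sqrt u) := by
        funext u; ring
      simp only [Pi.inv_apply] at h
      rw [hfun] at h
      refine h.congr_deriv ?_; symm
      rw [hsq]
      field_simp
      ring
    have h5 : HasDerivAt (fun u : ℝ => Er (a / (2 * Real.sqrt u)))
        (-Real.exp (-(a / (2 * Real.sqrt t)) ^ 2) * -(a / (4 * t * Real.sqrt t))) t :=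
      (Er_hasDerivAt _).comp t h4
    have h6 := ((h1.mul h3).div_const (Real.sqrt Real.pi)).sub
      (h5.const_mul (a / Real.sqrt Real.pi))
    rw [hG_def]
    refine h6.congr_deriv ?_; symm
    have hv : (a / (2 * Real.sqrt t)) ^ 2 = a ^ 2 / (4 * t) := by
      rw [div_pow, mul_pow, hsq]; norm_num
    rw [hv, Real.sqrt_mul Real.pi_pos.le,
      show -a ^ 2 / (4 * t) = -(a ^ 2 / (4 * t)) from neg_div _ _]
    generalize Real.exp (-(a ^ 2 / (4 * t))) = E
    generalize Real.sqrt t = s at hsq hst ⊢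
    rw [← hsq]
    field_simp
    ring
  have h0lim : Filter.Tendsto G (𝓝[>] (0:ℝ)) (𝓝 0) := by
    have hf1 : Filter.Tendsto (fun t : ℝ => Real.sqrt t * Real.exp (-a ^ 2 / (4 * t)) / Real.sqrt Real.pi)
        (𝓝[>] (0:ℝ)) (𝓝 0) := by
      have hbound : ∀ᶠ t in 𝓝[>] (0:ℝ),
          ‖Real.sqrt t * Real.exp (-a ^ 2 / (4 * t)) / Real.sqrt Real.pi‖
            ≤ Real.sqrt t / Real.sqrt Real.pi := by
        filter_upwards [self_mem_nhdsWithin] with t (ht : t ∈ Ioi (0:ℝ))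
        have ht0 : (0:ℝ) < t := ht
        have h1 : Real.exp (-a ^ 2 / (4 * t)) ≤ 1 :=
          Real.exp_le_one_iff.mpr (by rw [neg_div]; exact neg_nonpos.mpr (by positivity))
        rw [Real.norm_eq_abs, abs_of_nonneg (by positivity)]
        calc Real.sqrt t * Real.exp (-a ^ 2 / (4 * t)) / Real.sqrt Real.pi
            ≤ Real.sqrt t * 1 / Real.sqrt Real.pi := by
              gcongr
          _ = Real.sqrt t / Real.sqrt Real.pi := by ring
      have hten : Filter.Tendsto (fun t : ℝ => Real.sqrt t / Real.sqrt Real.pi) (𝓝[>] (0:ℝ))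
          (𝓝 0) := by
        have : Filter.Tendsto (fun t : ℝ => Real.sqrt t / Real.sqrt Real.pi) (𝓝 (0:ℝ))
            (𝓝 (Real.sqrt 0 / Real.sqrt Real.pi)) :=
          (Real.continuous_sqrt.tendsto 0).div_const _
        simp only [Real.sqrt_zero, zero_div] at this
        exact this.mono_left nhdsWithin_le_nhds
      exact squeeze_zero_norm' hbound hten
    have hf2 : Filter.Tendsto (fun t : ℝ => a / Real.sqrt Real.pi * Er (a / (2 * Real.sqrt t)))
        (𝓝[>] (0:ℝ)) (𝓝 0) := by
      rcases eq_or_lt_of_le ha with rfl | hapos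
      · simpa using (tendsto_const_nhds : Filter.Tendsto (fun _ : ℝ => (0:ℝ)) (𝓝[>] (0:ℝ)) _)
      · have hs : Filter.Tendsto (fun t : ℝ => Real.sqrt t) (𝓝[>] (0:ℝ)) (𝓝[>] (0:ℝ)) := by
          rw [tendsto_nhdsWithin_iff]
          constructor
          · have : Filter.Tendsto (fun t : ℝ => Real.sqrt t) (𝓝 (0:ℝ)) (𝓝 (Real.sqrt 0)) :=
              Real.continuous_sqrt.tendsto 0
            simpa using this.mono_left nhdsWithin_le_nhds
          · filter_upwards [self_mem_nhdsWithin] with t (ht : t ∈ Ioi (0:ℝ))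
            exact Real.sqrt_pos.mpr ht
        have hinv : Filter.Tendsto (fun t : ℝ => (Real.sqrt t)⁻¹) (𝓝[>] (0:ℝ)) Filter.atTop :=
          tendsto_inv_nhdsGT_zero.comp hs
        have harg : Filter.Tendsto (fun t : ℝ => a / (2 * Real.sqrt t)) (𝓝[>] (0:ℝ))
            Filter.atTop := by
          have := hinv.const_mul_atTop (show (0:ℝ) < a / 2 by linarith)
          refine this.congr fun t => by ring
        have hEr : Filter.Tendsto (fun t : ℝ => Er (a / (2 * Real.sqrt t))) (𝓝[>] (0:ℝ)) (𝓝 0) :=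
          Er_tendsto_zero.comp harg
        have := hEr.const_mul (a / Real.sqrt Real.pi)
        simpa using this
    have := hf1.sub hf2
    simpa using this
  have hδlim : Filter.Tendsto G (𝓝[<] δ) (𝓝 (G δ)) :=
    (hG δ hδ).continuousAt.continuousWithinAt
  rw [intervalIntegral.integral_eq_sub_of_hasDerivAt_of_tendsto hδ
    (fun t htm => hG t htm.1) (B'_intervalIntegrable hδ) h0lim hδlim]
  rw [hG_def, sub_zero]

end SLaux


set_option maxHeartbeats 1000000 in
open SLaux in
/-- Leading-order asymptotics of the local single layer heat potential at the
target point `(0, c√δ)` off a boundary curve `x₂ = h(x₁)` tangent to the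
horizontal axis at the origin. -/
theorem local_single_layer_off_surface_asymptotics
    (h : ℝ → ℝ) (hh : ContDiff ℝ (⊤ : ℕ∞) h) (h0 : h 0 = 0) (h0' : deriv h 0 = 0)
    (σ : ℝ → ℝ) (hσ : ContDiff ℝ (⊤ : ℕ∞) σ) (hσc : HasCompactSupport σ)
    (c : ℝ) (hc : 0 ≤ c) :
    ∃ C > (0:ℝ), ∃ δ₀ > (0:ℝ), ∀ δ : ℝ, 0 < δ → δ ≤ δ₀ →
      |(∫ t in (0:ℝ)..δ, ∫ ξ : ℝ,
          Real.exp (-(ξ ^ 2 + (c * Real.sqrt δ - h ξ) ^ 2) / (4 * t)) / (4 * Real.pi * t) *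
            (σ ξ * Real.sqrt (1 + (deriv h ξ) ^ 2)))
        - Real.sqrt δ * (σ 0 / 2) *
            ((2 / Real.sqrt Real.pi) * Real.exp (-c ^ 2 / 4) - c * erfc (c / 2))|
        ≤ C * δ := by
  have hsqpi : 0 < Real.sqrt Real.pi := Real.sqrt_pos.mpr Real.pi_pos
  -- regularity
  have hh' : ContDiff ℝ ((⊤ : ℕ∞) : WithTop ℕ∞) h := hh.of_le (by simp)
  have hσ' : ContDiff ℝ ((⊤ : ℕ∞) : WithTop ℕ∞) σ := hσ.of_le (by simp)
  have hdh : ContDiff ℝ ((⊤ : ℕ∞) : WithTop ℕ∞) (deriv h) := (contDiff_infty_iff_deriv.mp hh').2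
  have hh_diff : Differentiable ℝ h := (contDiff_infty_iff_deriv.mp hh').1
  have hdh_diff : Differentiable ℝ (deriv h) := (contDiff_infty_iff_deriv.mp hdh).1
  have hddh_cont : Continuous (deriv (deriv h)) := (contDiff_infty_iff_deriv.mp hdh).2.continuous
  have hg_cd : ContDiff ℝ ((⊤ : ℕ∞) : WithTop ℕ∞)
      (fun ξ : ℝ => Real.sqrt (1 + deriv h ξ ^ 2)) := by
    apply ContDiff.sqrt (contDiff_const.add (hdh.pow 2))
    intro x; positivity
  have hf_cd : ContDiff ℝ ((⊤ : ℕ∞) : WithTop ℕ∞)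
      (fun ξ : ℝ => σ ξ * Real.sqrt (1 + deriv h ξ ^ 2)) := hσ'.mul hg_cd
  have hf_cont : Continuous (fun ξ : ℝ => σ ξ * Real.sqrt (1 + deriv h ξ ^ 2)) :=
    hf_cd.continuous
  have hf_cs : HasCompactSupport (fun ξ : ℝ => σ ξ * Real.sqrt (1 + deriv h ξ ^ 2)) :=
    hσc.mul_right
  obtain ⟨L₀, hL₀⟩ := ContDiff.lipschitzWith_of_hasCompactSupport hf_cs hf_cd
    (by simp)
  set L : ℝ := (L₀ : ℝ) with hL_def
  have hL0 : (0:ℝ) ≤ L := L₀.coe_nonneg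
  have hfl : ∀ ξ : ℝ, |σ ξ * Real.sqrt (1 + deriv h ξ ^ 2) - σ 0| ≤ L * |ξ| := by
    intro ξ
    have h1 := hL₀.dist_le_mul ξ 0
    simp only [Real.dist_eq, sub_zero] at h1
    have h2 : σ 0 * Real.sqrt (1 + deriv h 0 ^ 2) = σ 0 := by
      rw [h0']; norm_num
    rw [h2] at h1
    exact h1
  -- Taylor-type bound for h near 0
  obtain ⟨K₁, hK₁⟩ : ∃ C, ∀ x ∈ Icc (-1:ℝ) 1, ‖deriv (deriv h) x‖ ≤ C :=
    isCompact_Icc.exists_bound_of_continuousOn hddh_cont.continuousOn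
  set K : ℝ := max K₁ 0 with hK_def
  have hK0 : (0:ℝ) ≤ K := le_max_right _ _
  have hsub : ∀ ξ ∈ Icc (-1:ℝ) 1, uIcc (0:ℝ) ξ ⊆ Icc (-1) 1 := by
    intro ξ hξ
    rw [show Icc (-1:ℝ) 1 = uIcc (-1) 1 from (uIcc_of_le (by norm_num)).symm]
    exact uIcc_subset_uIcc
      (by rw [uIcc_of_le (by norm_num : (-1:ℝ) ≤ 1)]; constructor <;> norm_num)
      (by rwa [uIcc_of_le (by norm_num : (-1:ℝ) ≤ 1)])
  have hdh_bound : ∀ ξ ∈ Icc (-1:ℝ) 1, |deriv h ξ| ≤ K * |ξ| := by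
    intro ξ hξ
    have h1 := Convex.norm_image_sub_le_of_norm_deriv_le (f := deriv h) (C := K)
      (fun x _ => hdh_diff x)
      (fun x hx => le_trans (hK₁ x (hsub ξ hξ hx)) (le_max_left _ _))
      (convex_uIcc _ _) (left_mem_uIcc) (right_mem_uIcc)
    simpa [h0', Real.norm_eq_abs] using h1
  have hKb : ∀ ξ ∈ Icc (-1:ℝ) 1, |h ξ| ≤ K * ξ ^ 2 := by
    intro ξ hξ
    have hbd : ∀ x ∈ uIcc (0:ℝ) ξ, ‖deriv h x‖ ≤ K * |ξ| := by
      intro x hx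
      have h1 : |deriv h x| ≤ K * |x| := hdh_bound x (hsub ξ hξ hx)
      have h2 : |x| ≤ |ξ| := by
        rcases mem_uIcc.mp hx with ⟨hx1, hx2⟩ | ⟨hx1, hx2⟩ <;>
          rw [abs_le] <;> constructor <;>
            linarith [le_abs_self ξ, neg_abs_le ξ, abs_nonneg ξ]
      calc ‖deriv h x‖ = |deriv h x| := rfl
        _ ≤ K * |x| := h1
        _ ≤ K * |ξ| := mul_le_mul_of_nonneg_left h2 hK0
    have h1 := Convex.norm_image_sub_le_of_norm_deriv_le (f := h)
      (fun x _ => hh_diff x) hbd (convex_uIcc _ _) (left_mem_uIcc) (right_mem_uIcc)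
    simp only [h0, sub_zero, Real.norm_eq_abs] at h1
    calc |h ξ| ≤ K * |ξ| * |ξ| := h1
      _ = K * ξ ^ 2 := by rw [mul_assoc, abs_mul_abs_self, sq]
  -- constants
  set S : ℝ := |σ 0| with hS_def
  have hS0 : (0:ℝ) ≤ S := abs_nonneg _
  set E₁ : ℝ := (4 * L + 256 * S * K ^ 2 + 32 * S) / Real.sqrt Real.pi with hE₁_def
  set E₂ : ℝ := 8 * K * S / Real.sqrt Real.pi with hE₂_def
  have hE₁0 : 0 ≤ E₁ := by rw [hE₁_def]; positivity
  have hE₂0 : 0 ≤ E₂ := by rw [hE₂_def]; positivity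
  clear_value L K S E₁ E₂
  refine ⟨E₁ + 2 * E₂ * c + 1, by positivity, 1, one_pos, ?_⟩
  intro δ hδ hδ1
  set a : ℝ := c * Real.sqrt δ with ha_def
  have ha : 0 ≤ a := by rw [ha_def]; positivity
  have hsδ : 0 < Real.sqrt δ := Real.sqrt_pos.mpr hδ
  clear_value a
  -- the exact model time integral
  have hTval : Real.sqrt δ * (σ 0 / 2) *
      ((2 / Real.sqrt Real.pi) * Real.exp (-c ^ 2 / 4) - c * erfc (c / 2))
      = ∫ t in Ioc (0:ℝ) δ,
          σ 0 * (Real.exp (-a ^ 2 / (4 * t)) / (2 * Real.sqrt (Real.pi * t))) := by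
    rw [← intervalIntegral.integral_of_le hδ.le, intervalIntegral.integral_const_mul,
      key_time_integral ha hδ]
    have h1 : -a ^ 2 / (4 * δ) = -c ^ 2 / 4 := by
      rw [ha_def, mul_pow, Real.sq_sqrt hδ.le]; field_simp
    have h2 : a / (2 * Real.sqrt δ) = c / 2 := by
      rw [ha_def]; field_simp
    rw [h1, h2, erfc_eq, ha_def]
    ring
  -- key pointwise-in-time estimate
  have key : ∀ t ∈ Ioc (0:ℝ) δ,
      |(∫ ξ : ℝ, Real.exp (-(ξ ^ 2 + (a - h ξ) ^ 2) / (4 * t)) / (4 * Real.pi * t) *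
          (σ ξ * Real.sqrt (1 + (deriv h ξ) ^ 2)))
        - σ 0 * (Real.exp (-a ^ 2 / (4 * t)) / (2 * Real.sqrt (Real.pi * t)))|
        ≤ E₁ + E₂ * a * (Real.sqrt t)⁻¹ := by
    intro t htm
    obtain ⟨ht, htδ⟩ := htm
    have ht1 : t ≤ 1 := le_trans htδ hδ1
    have hst : 0 < Real.sqrt t := Real.sqrt_pos.mpr ht
    have hsqt : Real.sqrt t * Real.sqrt t = t := Real.mul_self_sqrt ht.le
    have hst1 : Real.sqrt t ≤ 1 := by
      rw [show (1:ℝ) = Real.sqrt 1 by simp]; exact Real.sqrt_le_sqrt ht1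
    have hP : (0:ℝ) < 4 * Real.pi * t := by positivity
    set W : ℝ := L / (Real.pi * Real.sqrt t) + S * (64 * K ^ 2) / Real.pi + 8 * S / Real.pi
      + 2 * a * K * S / (Real.pi * t) with hW_def
    have hW0 : 0 ≤ W := by rw [hW_def]; positivity
    -- monotonicity facts for exponentials
    have hmono4 : ∀ ξ : ℝ, Real.exp (-(ξ ^ 2 + (a - h ξ) ^ 2) / (4 * t))
        ≤ Real.exp (-ξ ^ 2 / (8 * t)) := by
      intro ξ
      apply Real.exp_le_exp.mpr
      rw [neg_div, neg_div, neg_le_neg_iff]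
      calc ξ ^ 2 / (8 * t) ≤ ξ ^ 2 / (4 * t) :=
            div_le_div_of_nonneg_left (sq_nonneg ξ) (by positivity) (by linarith)
        _ ≤ (ξ ^ 2 + (a - h ξ) ^ 2) / (4 * t) := by
            gcongr
            linarith [sq_nonneg (a - h ξ)]
    have hmono0 : ∀ ξ : ℝ, Real.exp (-(ξ ^ 2 + a ^ 2) / (4 * t))
        ≤ Real.exp (-ξ ^ 2 / (8 * t)) := by
      intro ξ
      apply Real.exp_le_exp.mpr
      rw [neg_div, neg_div, neg_le_neg_iff]
      calc ξ ^ 2 / (8 * t) ≤ ξ ^ 2 / (4 * t) :=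
            div_le_div_of_nonneg_left (sq_nonneg ξ) (by positivity) (by linarith)
        _ ≤ (ξ ^ 2 + a ^ 2) / (4 * t) := by
            gcongr
            linarith [sq_nonneg a]
    have hmono8 : ∀ ξ : ℝ, Real.exp (-ξ ^ 2 / (8 * t)) ≤ Real.exp (-ξ ^ 2 / (16 * t)) := by
      intro ξ
      apply Real.exp_le_exp.mpr
      rw [neg_div, neg_div, neg_le_neg_iff]
      exact div_le_div_of_nonneg_left (sq_nonneg ξ) (by positivity) (by linarith)
    -- pointwise bound on the difference of integrands
    have hpt : ∀ ξ : ℝ,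
        |Real.exp (-(ξ ^ 2 + (a - h ξ) ^ 2) / (4 * t)) / (4 * Real.pi * t) *
            (σ ξ * Real.sqrt (1 + (deriv h ξ) ^ 2))
          - Real.exp (-(ξ ^ 2 + a ^ 2) / (4 * t)) / (4 * Real.pi * t) * σ 0|
        ≤ W * Real.exp (-ξ ^ 2 / (16 * t)) := by
      intro ξ
      have hG16pos : 0 < Real.exp (-ξ ^ 2 / (16 * t)) := Real.exp_pos _
      -- term A : replacing the density by its value at 0
      have htermA : |Real.exp (-(ξ ^ 2 + (a - h ξ) ^ 2) / (4 * t)) / (4 * Real.pi * t) *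
            (σ ξ * Real.sqrt (1 + (deriv h ξ) ^ 2))
          - Real.exp (-(ξ ^ 2 + (a - h ξ) ^ 2) / (4 * t)) / (4 * Real.pi * t) * σ 0|
          ≤ L / (Real.pi * Real.sqrt t) * Real.exp (-ξ ^ 2 / (16 * t)) := by
        rw [show Real.exp (-(ξ ^ 2 + (a - h ξ) ^ 2) / (4 * t)) / (4 * Real.pi * t) *
              (σ ξ * Real.sqrt (1 + (deriv h ξ) ^ 2))
            - Real.exp (-(ξ ^ 2 + (a - h ξ) ^ 2) / (4 * t)) / (4 * Real.pi * t) * σ 0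
            = Real.exp (-(ξ ^ 2 + (a - h ξ) ^ 2) / (4 * t)) / (4 * Real.pi * t) *
              (σ ξ * Real.sqrt (1 + deriv h ξ ^ 2) - σ 0) from by ring]
        rw [abs_mul, abs_of_nonneg (by positivity)]
        calc Real.exp (-(ξ ^ 2 + (a - h ξ) ^ 2) / (4 * t)) / (4 * Real.pi * t) *
              |σ ξ * Real.sqrt (1 + deriv h ξ ^ 2) - σ 0|
            ≤ Real.exp (-ξ ^ 2 / (8 * t)) / (4 * Real.pi * t) * (L * |ξ|) := by
              apply mul_le_mul _ (hfl ξ) (abs_nonneg _) (by positivity)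
              exact (div_le_div_iff_of_pos_right hP).mpr (hmono4 ξ)
          _ = L * (|ξ| * Real.exp (-ξ ^ 2 / (8 * t))) / (4 * Real.pi * t) := by ring
          _ ≤ L * (4 * Real.sqrt t * Real.exp (-ξ ^ 2 / (16 * t))) / (4 * Real.pi * t) :=
              (div_le_div_iff_of_pos_right hP).mpr (mul_le_mul_of_nonneg_left (H1 ht ξ) hL0)
          _ = L / (Real.pi * Real.sqrt t) * Real.exp (-ξ ^ 2 / (16 * t)) := by
              field_simp
              linear_combination L * hsqt
      -- term B : replacing the curved kernel by the flat one
      have htermB : |Real.exp (-(ξ ^ 2 + (a - h ξ) ^ 2) / (4 * t)) / (4 * Real.pi * t) * σ 0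
          - Real.exp (-(ξ ^ 2 + a ^ 2) / (4 * t)) / (4 * Real.pi * t) * σ 0|
          ≤ (S * (64 * K ^ 2) / Real.pi + 8 * S / Real.pi + 2 * a * K * S / (Real.pi * t)) *
            Real.exp (-ξ ^ 2 / (16 * t)) := by
        rw [show Real.exp (-(ξ ^ 2 + (a - h ξ) ^ 2) / (4 * t)) / (4 * Real.pi * t) * σ 0
            - Real.exp (-(ξ ^ 2 + a ^ 2) / (4 * t)) / (4 * Real.pi * t) * σ 0
            = (Real.exp (-(ξ ^ 2 + (a - h ξ) ^ 2) / (4 * t))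
                - Real.exp (-(ξ ^ 2 + a ^ 2) / (4 * t))) * σ 0 / (4 * Real.pi * t) from by ring]
        rw [abs_div, abs_mul, abs_of_pos hP, ← hS_def]
        rcases le_or_gt |ξ| 1 with hξ | hξ
        · -- Taylor regime
          have hmem : ξ ∈ Icc (-1:ℝ) 1 := ⟨(abs_le.mp hξ).1, (abs_le.mp hξ).2⟩
          have hhb : |h ξ| ≤ K * ξ ^ 2 := hKb ξ hmem
          have hexp : |Real.exp (-(ξ ^ 2 + (a - h ξ) ^ 2) / (4 * t)) -
              Real.exp (-(ξ ^ 2 + a ^ 2) / (4 * t))|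
              ≤ Real.exp (-(ξ ^ 2 / (4 * t))) *
                ((K ^ 2 * ξ ^ 4 + 2 * a * K * ξ ^ 2) / (4 * t)) := by
            rw [show -(ξ ^ 2 + (a - h ξ) ^ 2) / (4 * t)
                = -((ξ ^ 2 + (a - h ξ) ^ 2) / (4 * t)) from neg_div _ _,
              show -(ξ ^ 2 + a ^ 2) / (4 * t) = -((ξ ^ 2 + a ^ 2) / (4 * t)) from neg_div _ _]
            have hx : ξ ^ 2 / (4 * t) ≤ (ξ ^ 2 + (a - h ξ) ^ 2) / (4 * t) := by
              gcongr
              linarith [sq_nonneg (a - h ξ)]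
            have hy : ξ ^ 2 / (4 * t) ≤ (ξ ^ 2 + a ^ 2) / (4 * t) := by
              gcongr
              linarith [sq_nonneg a]
            have h1 := exp_neg_diff_le' hx hy (by positivity)
            have habs2 : |(ξ ^ 2 + (a - h ξ) ^ 2) / (4 * t) - (ξ ^ 2 + a ^ 2) / (4 * t)|
                ≤ (K ^ 2 * ξ ^ 4 + 2 * a * K * ξ ^ 2) / (4 * t) := by
              rw [div_sub_div_same, abs_div, abs_of_pos (by positivity : (0:ℝ) < 4 * t)]
              gcongr
              rw [show ξ ^ 2 + (a - h ξ) ^ 2 - (ξ ^ 2 + a ^ 2) = h ξ * (h ξ - 2 * a) from by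
                ring]
              rw [abs_mul]
              have h2 : |h ξ - 2 * a| ≤ |h ξ| + 2 * a := by
                calc |h ξ - 2 * a| ≤ |h ξ| + |2 * a| := abs_sub _ _
                  _ = |h ξ| + 2 * a := by
                      rw [abs_of_nonneg (show (0:ℝ) ≤ 2 * a by positivity)]
              have h3 : |h ξ| * |h ξ - 2 * a| ≤ |h ξ| * (|h ξ| + 2 * a) :=
                mul_le_mul_of_nonneg_left h2 (abs_nonneg _)
              have h4 : |h ξ| * (|h ξ| + 2 * a) ≤ (K * ξ ^ 2) * (K * ξ ^ 2 + 2 * a) :=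
                mul_le_mul hhb (by linarith) (by positivity) (by positivity)
              have h5 : (K * ξ ^ 2) * (K * ξ ^ 2 + 2 * a) = K ^ 2 * ξ ^ 4 + 2 * a * K * ξ ^ 2 := by
                ring
              linarith [h3, h4]
            calc |Real.exp (-((ξ ^ 2 + (a - h ξ) ^ 2) / (4 * t)))
                - Real.exp (-((ξ ^ 2 + a ^ 2) / (4 * t)))|
                ≤ Real.exp (-(ξ ^ 2 / (4 * t))) *
                  |(ξ ^ 2 + (a - h ξ) ^ 2) / (4 * t) - (ξ ^ 2 + a ^ 2) / (4 * t)| := h1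
              _ ≤ Real.exp (-(ξ ^ 2 / (4 * t))) *
                  ((K ^ 2 * ξ ^ 4 + 2 * a * K * ξ ^ 2) / (4 * t)) := by
                  exact mul_le_mul_of_nonneg_left habs2 (Real.exp_nonneg _)
          have e8 : Real.exp (-(ξ ^ 2 / (4 * t))) ≤ Real.exp (-ξ ^ 2 / (8 * t)) := by
            apply Real.exp_le_exp.mpr
            rw [neg_div]
            apply neg_le_neg
            exact div_le_div_of_nonneg_left (sq_nonneg ξ) (by positivity) (by linarith)
          calc |Real.exp (-(ξ ^ 2 + (a - h ξ) ^ 2) / (4 * t))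
              - Real.exp (-(ξ ^ 2 + a ^ 2) / (4 * t))| * S / (4 * Real.pi * t)
              ≤ (Real.exp (-(ξ ^ 2 / (4 * t))) *
                  ((K ^ 2 * ξ ^ 4 + 2 * a * K * ξ ^ 2) / (4 * t))) * S / (4 * Real.pi * t) :=
                (div_le_div_iff_of_pos_right hP).mpr (mul_le_mul_of_nonneg_right hexp hS0)
            _ ≤ (Real.exp (-ξ ^ 2 / (8 * t)) *
                  ((K ^ 2 * ξ ^ 4 + 2 * a * K * ξ ^ 2) / (4 * t))) * S / (4 * Real.pi * t) :=
                (div_le_div_iff_of_pos_right hP).mpr (mul_le_mul_of_nonneg_right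
                  (mul_le_mul_of_nonneg_right e8 (by positivity)) hS0)
            _ = S * (K ^ 2 * (ξ ^ 4 * Real.exp (-ξ ^ 2 / (8 * t)))
                  + 2 * a * K * (ξ ^ 2 * Real.exp (-ξ ^ 2 / (8 * t)))) / (16 * Real.pi * t ^ 2)
                := by ring
            _ ≤ S * (K ^ 2 * (1024 * t ^ 2 * Real.exp (-ξ ^ 2 / (16 * t)))
                  + 2 * a * K * (16 * t * Real.exp (-ξ ^ 2 / (16 * t)))) / (16 * Real.pi * t ^ 2)
                := by
                apply (div_le_div_iff_of_pos_right
                  (show (0:ℝ) < 16 * Real.pi * t ^ 2 by positivity)).mpr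
                apply mul_le_mul_of_nonneg_left _ hS0
                apply add_le_add
                · exact mul_le_mul_of_nonneg_left (H3 ht ξ) (by positivity)
                · exact mul_le_mul_of_nonneg_left (H2 ht ξ) (by positivity)
            _ = (S * (64 * K ^ 2) / Real.pi + 2 * a * K * S / (Real.pi * t)) *
                  Real.exp (-ξ ^ 2 / (16 * t)) := by
                field_simp
                ring
            _ ≤ (S * (64 * K ^ 2) / Real.pi + 8 * S / Real.pi + 2 * a * K * S / (Real.pi * t)) *
                  Real.exp (-ξ ^ 2 / (16 * t)) := by
                have h9 : (0:ℝ) ≤ 8 * S / Real.pi * Real.exp (-ξ ^ 2 / (16 * t)) := by positivity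
                have h10 : (S * (64 * K ^ 2) / Real.pi + 2 * a * K * S / (Real.pi * t)) *
                      Real.exp (-ξ ^ 2 / (16 * t)) + 8 * S / Real.pi * Real.exp (-ξ ^ 2 / (16 * t))
                    = (S * (64 * K ^ 2) / Real.pi + 8 * S / Real.pi + 2 * a * K * S / (Real.pi * t)) *
                      Real.exp (-ξ ^ 2 / (16 * t)) := by ring
                linarith [h9, h10]
        · -- far-field regime
          have hξ2 : 1 ≤ ξ ^ 2 := by nlinarith [sq_abs ξ, abs_nonneg ξ, hξ]
          have hcrude : |Real.exp (-(ξ ^ 2 + (a - h ξ) ^ 2) / (4 * t))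
              - Real.exp (-(ξ ^ 2 + a ^ 2) / (4 * t))|
              ≤ 2 * Real.exp (-ξ ^ 2 / (8 * t)) := by
            have hm1 := hmono4 ξ
            have hm2 := hmono0 ξ
            have he1 := Real.exp_nonneg (-(ξ ^ 2 + (a - h ξ) ^ 2) / (4 * t))
            have he2 := Real.exp_nonneg (-(ξ ^ 2 + a ^ 2) / (4 * t))
            rw [abs_sub_le_iff]
            constructor <;> linarith
          have hsplit8 : Real.exp (-ξ ^ 2 / (8 * t))
              ≤ 16 * t * Real.exp (-ξ ^ 2 / (16 * t)) := by
            have hG16pos' : (0:ℝ) ≤ Real.exp (-ξ ^ 2 / (16 * t)) := Real.exp_nonneg _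
            have e1 : Real.exp (-ξ ^ 2 / (8 * t))
                = Real.exp (-ξ ^ 2 / (16 * t)) * Real.exp (-ξ ^ 2 / (16 * t)) := by
              rw [← Real.exp_add]; congr 1; field_simp; ring
            have e2 : Real.exp (-ξ ^ 2 / (16 * t)) ≤ Real.exp (-(1 / (16 * t))) := by
              apply Real.exp_le_exp.mpr
              rw [neg_div]
              apply neg_le_neg
              gcongr
            have e3 : Real.exp (-(1 / (16 * t))) ≤ 16 * t := by
              have h5 := mul_exp_neg_le_one (show (0:ℝ) ≤ 1 / (16 * t) by positivity)
              calc Real.exp (-(1 / (16 * t)))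
                  = (16 * t) * (1 / (16 * t) * Real.exp (-(1 / (16 * t)))) := by
                    field_simp
                _ ≤ 16 * t * 1 := by
                    exact mul_le_mul_of_nonneg_left h5 (by positivity)
                _ = 16 * t := mul_one _
            calc Real.exp (-ξ ^ 2 / (8 * t))
                = Real.exp (-ξ ^ 2 / (16 * t)) * Real.exp (-ξ ^ 2 / (16 * t)) := e1
              _ ≤ Real.exp (-(1 / (16 * t))) * Real.exp (-ξ ^ 2 / (16 * t)) :=
                  mul_le_mul_of_nonneg_right e2 hG16pos'
              _ ≤ 16 * t * Real.exp (-ξ ^ 2 / (16 * t)) :=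
                  mul_le_mul_of_nonneg_right e3 hG16pos'
          calc |Real.exp (-(ξ ^ 2 + (a - h ξ) ^ 2) / (4 * t))
              - Real.exp (-(ξ ^ 2 + a ^ 2) / (4 * t))| * S / (4 * Real.pi * t)
              ≤ (2 * Real.exp (-ξ ^ 2 / (8 * t))) * S / (4 * Real.pi * t) :=
                (div_le_div_iff_of_pos_right hP).mpr (mul_le_mul_of_nonneg_right hcrude hS0)
            _ ≤ (2 * (16 * t * Real.exp (-ξ ^ 2 / (16 * t)))) * S / (4 * Real.pi * t) :=
                (div_le_div_iff_of_pos_right hP).mpr (mul_le_mul_of_nonneg_right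
                  (mul_le_mul_of_nonneg_left hsplit8 (by norm_num)) hS0)
            _ = 8 * S / Real.pi * Real.exp (-ξ ^ 2 / (16 * t)) := by
                field_simp
                ring
            _ ≤ (S * (64 * K ^ 2) / Real.pi + 8 * S / Real.pi + 2 * a * K * S / (Real.pi * t)) *
                  Real.exp (-ξ ^ 2 / (16 * t)) := by
                have h9 : (0:ℝ) ≤ (S * (64 * K ^ 2) / Real.pi + 2 * a * K * S / (Real.pi * t)) *
                    Real.exp (-ξ ^ 2 / (16 * t)) := by positivity
                have h10 : 8 * S / Real.pi * Real.exp (-ξ ^ 2 / (16 * t)) +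
                      (S * (64 * K ^ 2) / Real.pi + 2 * a * K * S / (Real.pi * t)) *
                      Real.exp (-ξ ^ 2 / (16 * t))
                    = (S * (64 * K ^ 2) / Real.pi + 8 * S / Real.pi + 2 * a * K * S / (Real.pi * t)) *
                      Real.exp (-ξ ^ 2 / (16 * t)) := by ring
                linarith [h9, h10]
      calc |Real.exp (-(ξ ^ 2 + (a - h ξ) ^ 2) / (4 * t)) / (4 * Real.pi * t) *
            (σ ξ * Real.sqrt (1 + (deriv h ξ) ^ 2))
          - Real.exp (-(ξ ^ 2 + a ^ 2) / (4 * t)) / (4 * Real.pi * t) * σ 0|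
          ≤ |Real.exp (-(ξ ^ 2 + (a - h ξ) ^ 2) / (4 * t)) / (4 * Real.pi * t) *
              (σ ξ * Real.sqrt (1 + (deriv h ξ) ^ 2))
            - Real.exp (-(ξ ^ 2 + (a - h ξ) ^ 2) / (4 * t)) / (4 * Real.pi * t) * σ 0|
            + |Real.exp (-(ξ ^ 2 + (a - h ξ) ^ 2) / (4 * t)) / (4 * Real.pi * t) * σ 0
            - Real.exp (-(ξ ^ 2 + a ^ 2) / (4 * t)) / (4 * Real.pi * t) * σ 0| := abs_sub_le _ _ _
        _ ≤ L / (Real.pi * Real.sqrt t) * Real.exp (-ξ ^ 2 / (16 * t))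
            + (S * (64 * K ^ 2) / Real.pi + 8 * S / Real.pi + 2 * a * K * S / (Real.pi * t)) *
              Real.exp (-ξ ^ 2 / (16 * t)) := add_le_add htermA htermB
        _ = W * Real.exp (-ξ ^ 2 / (16 * t)) := by rw [hW_def]; ring
    -- the model Gaussian integral
    have hsplit0 : ∀ ξ : ℝ, Real.exp (-(ξ ^ 2 + a ^ 2) / (4 * t)) / (4 * Real.pi * t) * σ 0
        = σ 0 * Real.exp (-a ^ 2 / (4 * t)) / (4 * Real.pi * t) * Real.exp (-ξ ^ 2 / (4 * t)) := by
      intro ξ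
      rw [show -(ξ ^ 2 + a ^ 2) / (4 * t) = -ξ ^ 2 / (4 * t) + -a ^ 2 / (4 * t) from by ring,
        Real.exp_add]
      ring
    have hint0 : Integrable (fun ξ : ℝ =>
        Real.exp (-(ξ ^ 2 + a ^ 2) / (4 * t)) / (4 * Real.pi * t) * σ 0) := by
      simp_rw [hsplit0]
      exact (gauss_integrable (show (0:ℝ) < 4 * t by positivity)).const_mul _
    have hmodel : (∫ ξ : ℝ, Real.exp (-(ξ ^ 2 + a ^ 2) / (4 * t)) / (4 * Real.pi * t) * σ 0)
        = σ 0 * (Real.exp (-a ^ 2 / (4 * t)) / (2 * Real.sqrt (Real.pi * t))) := by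
      simp_rw [hsplit0]
      rw [integral_const_mul, gauss_integral (show (0:ℝ) < 4 * t by positivity)]
      have h4 : Real.sqrt (Real.pi * (4 * t)) = 2 * Real.sqrt (Real.pi * t) := by
        rw [show Real.pi * (4 * t) = 4 * (Real.pi * t) from by ring,
          Real.sqrt_mul (by norm_num : (0:ℝ) ≤ 4),
          show Real.sqrt 4 = 2 from by
            rw [show (4:ℝ) = 2 ^ 2 by norm_num, Real.sqrt_sq (by norm_num : (0:ℝ) ≤ 2)]]
      rw [h4]
      have h5 : Real.sqrt (Real.pi * t) * Real.sqrt (Real.pi * t) = Real.pi * t :=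
        Real.mul_self_sqrt (by positivity)
      have h6 : Real.sqrt (Real.pi * t) ≠ 0 := by positivity
      generalize hug : Real.sqrt (Real.pi * t) = u at h5 h6 ⊢
      rw [show (4:ℝ) * Real.pi * t = 4 * (Real.pi * t) from by ring, ← h5]
      field_simp
      ring
    -- integrability of the curved integrand
    have hFh_cont : Continuous (fun ξ : ℝ =>
        Real.exp (-(ξ ^ 2 + (a - h ξ) ^ 2) / (4 * t)) / (4 * Real.pi * t) *
          (σ ξ * Real.sqrt (1 + (deriv h ξ) ^ 2))) := by
      apply Continuous.mul _ hf_cont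
      apply Continuous.div_const
      apply Real.continuous_exp.comp
      apply Continuous.div_const
      exact ((continuous_pow 2).add ((continuous_const.sub hh.continuous).pow 2)).neg
    have hFh_int : Integrable (fun ξ : ℝ =>
        Real.exp (-(ξ ^ 2 + (a - h ξ) ^ 2) / (4 * t)) / (4 * Real.pi * t) *
          (σ ξ * Real.sqrt (1 + (deriv h ξ) ^ 2))) := by
      apply Integrable.mono' ((gauss_integrable (show (0:ℝ) < 16 * t by positivity)).const_mul
        ((L * (4 * Real.sqrt t) + S) / (4 * Real.pi * t)))
        hFh_cont.aestronglyMeasurable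
      apply ae_of_all
      intro ξ
      rw [Real.norm_eq_abs, abs_mul, abs_of_nonneg (by positivity)]
      have h1 : |σ ξ * Real.sqrt (1 + deriv h ξ ^ 2)| ≤ L * |ξ| + S := by
        have h2 := abs_add_le (σ ξ * Real.sqrt (1 + deriv h ξ ^ 2) - σ 0) (σ 0)
        rw [sub_add_cancel] at h2
        have h3 : S = |σ 0| := hS_def
        linarith [hfl ξ]
      calc Real.exp (-(ξ ^ 2 + (a - h ξ) ^ 2) / (4 * t)) / (4 * Real.pi * t) *
            |σ ξ * Real.sqrt (1 + deriv h ξ ^ 2)|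
          ≤ Real.exp (-ξ ^ 2 / (8 * t)) / (4 * Real.pi * t) * (L * |ξ| + S) :=
            mul_le_mul ((div_le_div_iff_of_pos_right hP).mpr (hmono4 ξ)) h1 (abs_nonneg _)
              (by positivity)
        _ = (L * (|ξ| * Real.exp (-ξ ^ 2 / (8 * t)))
              + S * Real.exp (-ξ ^ 2 / (8 * t))) / (4 * Real.pi * t) := by ring
        _ ≤ (L * (4 * Real.sqrt t * Real.exp (-ξ ^ 2 / (16 * t)))
              + S * Real.exp (-ξ ^ 2 / (16 * t))) / (4 * Real.pi * t) :=
            (div_le_div_iff_of_pos_right hP).mpr (add_le_add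
              (mul_le_mul_of_nonneg_left (H1 ht ξ) hL0)
              (mul_le_mul_of_nonneg_left (hmono8 ξ) hS0))
        _ = (L * (4 * Real.sqrt t) + S) / (4 * Real.pi * t) * Real.exp (-ξ ^ 2 / (16 * t)) := by
            ring
    -- assemble
    rw [show (∫ ξ : ℝ, Real.exp (-(ξ ^ 2 + (a - h ξ) ^ 2) / (4 * t)) / (4 * Real.pi * t) *
          (σ ξ * Real.sqrt (1 + (deriv h ξ) ^ 2)))
        - σ 0 * (Real.exp (-a ^ 2 / (4 * t)) / (2 * Real.sqrt (Real.pi * t)))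
        = ∫ ξ : ℝ, (Real.exp (-(ξ ^ 2 + (a - h ξ) ^ 2) / (4 * t)) / (4 * Real.pi * t) *
            (σ ξ * Real.sqrt (1 + (deriv h ξ) ^ 2))
          - Real.exp (-(ξ ^ 2 + a ^ 2) / (4 * t)) / (4 * Real.pi * t) * σ 0) from by
      rw [← hmodel, ← integral_sub hFh_int hint0]]
    have hWb : |∫ ξ : ℝ, (Real.exp (-(ξ ^ 2 + (a - h ξ) ^ 2) / (4 * t)) / (4 * Real.pi * t) *
            (σ ξ * Real.sqrt (1 + (deriv h ξ) ^ 2))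
          - Real.exp (-(ξ ^ 2 + a ^ 2) / (4 * t)) / (4 * Real.pi * t) * σ 0)|
        ≤ W * Real.sqrt (Real.pi * (16 * t)) := by
      have hb := MeasureTheory.norm_integral_le_of_norm_le
        ((gauss_integrable (show (0:ℝ) < 16 * t by positivity)).const_mul W)
        (ae_of_all _ (fun ξ => by rw [Real.norm_eq_abs]; exact hpt ξ))
      rw [integral_const_mul,
        gauss_integral (show (0:ℝ) < 16 * t by positivity), Real.norm_eq_abs] at hb
      exact hb
    refine hWb.trans ?_
    have h16 : Real.sqrt (Real.pi * (16 * t)) = 4 * (Real.sqrt Real.pi * Real.sqrt t) := by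
      rw [show Real.pi * (16 * t) = 16 * (Real.pi * t) from by ring,
        Real.sqrt_mul (by norm_num : (0:ℝ) ≤ 16), Real.sqrt_mul Real.pi_pos.le,
        show Real.sqrt 16 = 4 from by
          rw [show (16:ℝ) = 4 ^ 2 by norm_num, Real.sqrt_sq (by norm_num : (0:ℝ) ≤ 4)]]
    rw [h16]
    have hππ : Real.sqrt Real.pi * Real.sqrt Real.pi = Real.pi :=
      Real.mul_self_sqrt Real.pi_pos.le
    have hexp_eq : W * (4 * (Real.sqrt Real.pi * Real.sqrt t))
        = 4 * L / Real.sqrt Real.pi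
          + (256 * S * K ^ 2 + 32 * S) * Real.sqrt t / Real.sqrt Real.pi
          + 8 * K * S / Real.sqrt Real.pi * a * (Real.sqrt t)⁻¹ := by
      rw [hW_def]
      generalize hpg : Real.sqrt Real.pi = p at hππ hsqpi ⊢
      generalize hsg : Real.sqrt t = s at hsqt hst ⊢
      rw [← hππ, ← hsqt]
      have hp0 : p ≠ 0 := ne_of_gt hsqpi
      have hs0 : s ≠ 0 := ne_of_gt hst
      field_simp
      ring
    rw [hexp_eq]
    have hE₁split : E₁ = 4 * L / Real.sqrt Real.pi
        + (256 * S * K ^ 2 + 32 * S) / Real.sqrt Real.pi := by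
      rw [hE₁_def]; ring
    have hmono : (256 * S * K ^ 2 + 32 * S) * Real.sqrt t / Real.sqrt Real.pi
        ≤ (256 * S * K ^ 2 + 32 * S) / Real.sqrt Real.pi :=
      (div_le_div_iff_of_pos_right hsqpi).mpr (mul_le_of_le_one_right (by positivity) hst1)
    rw [hE₂_def, hE₁split]
    linarith [hmono]
  -- outer integral assembly
  have hjoint : AEStronglyMeasurable (fun t : ℝ => ∫ ξ : ℝ,
      Real.exp (-(ξ ^ 2 + (a - h ξ) ^ 2) / (4 * t)) / (4 * Real.pi * t) *
        (σ ξ * Real.sqrt (1 + (deriv h ξ) ^ 2))) (volume.restrict (Ioc 0 δ)) := by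
    have hm : StronglyMeasurable (Function.uncurry fun (t ξ : ℝ) =>
        Real.exp (-(ξ ^ 2 + (a - h ξ) ^ 2) / (4 * t)) / (4 * Real.pi * t) *
          (σ ξ * Real.sqrt (1 + (deriv h ξ) ^ 2))) := by
      apply Measurable.stronglyMeasurable
      apply Measurable.mul
      · apply Measurable.div
        · apply Real.measurable_exp.comp
          apply Measurable.div
          · exact (((measurable_snd.pow_const 2).add
              ((measurable_const.sub (hh.continuous.measurable.comp measurable_snd)).pow_const
                2)).neg)
          · exact measurable_const.mul measurable_fst
        · exact measurable_const.mul measurable_fst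
      · exact hf_cont.measurable.comp measurable_snd
    exact (hm.integral_prod_right).aestronglyMeasurable.restrict
  have hBint : IntegrableOn (fun t : ℝ =>
      σ 0 * (Real.exp (-a ^ 2 / (4 * t)) / (2 * Real.sqrt (Real.pi * t)))) (Ioc 0 δ) := by
    have hB := B'_intervalIntegrable (a := a) hδ
    rw [intervalIntegrable_iff_integrableOn_Ioc_of_le hδ.le] at hB
    exact hB.const_mul _
  have hbound_int : IntegrableOn (fun t : ℝ => E₁ + E₂ * a * t ^ (-(1/2) : ℝ)) (Ioc 0 δ) := by
    apply Integrable.add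
    · exact integrableOn_const (by rw [Real.volume_Ioc]; exact ENNReal.ofReal_ne_top)
    · have hr := intervalIntegral.intervalIntegrable_rpow'
        (show (-1:ℝ) < -(1/2) by norm_num) (a := (0:ℝ)) (b := δ)
      rw [intervalIntegrable_iff_integrableOn_Ioc_of_le hδ.le] at hr
      exact hr.const_mul _
  have hkey' : ∀ᵐ t ∂(volume.restrict (Ioc (0:ℝ) δ)),
      ‖(∫ ξ : ℝ, Real.exp (-(ξ ^ 2 + (a - h ξ) ^ 2) / (4 * t)) / (4 * Real.pi * t) *
          (σ ξ * Real.sqrt (1 + (deriv h ξ) ^ 2)))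
        - σ 0 * (Real.exp (-a ^ 2 / (4 * t)) / (2 * Real.sqrt (Real.pi * t)))‖
        ≤ E₁ + E₂ * a * t ^ (-(1/2) : ℝ) := by
    filter_upwards [ae_restrict_mem measurableSet_Ioc] with t htm
    have h1 := key t htm
    rw [Real.norm_eq_abs]
    have h2 : t ^ (-(1/2) : ℝ) = (Real.sqrt t)⁻¹ := by
      rw [Real.rpow_neg htm.1.le, Real.sqrt_eq_rpow]
    rw [h2]
    exact h1
  have hdiff_int : IntegrableOn (fun t : ℝ =>
      (∫ ξ : ℝ, Real.exp (-(ξ ^ 2 + (a - h ξ) ^ 2) / (4 * t)) / (4 * Real.pi * t) *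
          (σ ξ * Real.sqrt (1 + (deriv h ξ) ^ 2)))
        - σ 0 * (Real.exp (-a ^ 2 / (4 * t)) / (2 * Real.sqrt (Real.pi * t)))) (Ioc 0 δ) :=
    Integrable.mono' hbound_int (hjoint.sub hBint.aestronglyMeasurable) hkey'
  have hAint : IntegrableOn (fun t : ℝ => ∫ ξ : ℝ,
      Real.exp (-(ξ ^ 2 + (a - h ξ) ^ 2) / (4 * t)) / (4 * Real.pi * t) *
        (σ ξ * Real.sqrt (1 + (deriv h ξ) ^ 2))) (Ioc 0 δ) := by
    have hsum := hdiff_int.add hBint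
    have : (fun t : ℝ =>
        ((∫ ξ : ℝ, Real.exp (-(ξ ^ 2 + (a - h ξ) ^ 2) / (4 * t)) / (4 * Real.pi * t) *
            (σ ξ * Real.sqrt (1 + (deriv h ξ) ^ 2)))
          - σ 0 * (Real.exp (-a ^ 2 / (4 * t)) / (2 * Real.sqrt (Real.pi * t))))
        + σ 0 * (Real.exp (-a ^ 2 / (4 * t)) / (2 * Real.sqrt (Real.pi * t))))
        = fun t : ℝ => ∫ ξ : ℝ,
            Real.exp (-(ξ ^ 2 + (a - h ξ) ^ 2) / (4 * t)) / (4 * Real.pi * t) *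
              (σ ξ * Real.sqrt (1 + (deriv h ξ) ^ 2)) := by
      funext t; ring
    exact hsum.congr (Filter.Eventually.of_forall fun t => by
      show ((∫ ξ : ℝ, Real.exp (-(ξ ^ 2 + (a - h ξ) ^ 2) / (4 * t)) / (4 * Real.pi * t) *
          (σ ξ * Real.sqrt (1 + (deriv h ξ) ^ 2)))
        - σ 0 * (Real.exp (-a ^ 2 / (4 * t)) / (2 * Real.sqrt (Real.pi * t))))
        + σ 0 * (Real.exp (-a ^ 2 / (4 * t)) / (2 * Real.sqrt (Real.pi * t)))
        = ∫ ξ : ℝ, Real.exp (-(ξ ^ 2 + (a - h ξ) ^ 2) / (4 * t)) / (4 * Real.pi * t) *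
            (σ ξ * Real.sqrt (1 + (deriv h ξ) ^ 2))
      ring)
  -- final chain
  rw [intervalIntegral.integral_of_le hδ.le, hTval,
    show (∫ t in Ioc (0:ℝ) δ, ∫ ξ : ℝ,
        Real.exp (-(ξ ^ 2 + (a - h ξ) ^ 2) / (4 * t)) / (4 * Real.pi * t) *
          (σ ξ * Real.sqrt (1 + (deriv h ξ) ^ 2)))
      - (∫ t in Ioc (0:ℝ) δ,
          σ 0 * (Real.exp (-a ^ 2 / (4 * t)) / (2 * Real.sqrt (Real.pi * t))))
      = ∫ t in Ioc (0:ℝ) δ,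
          ((∫ ξ : ℝ, Real.exp (-(ξ ^ 2 + (a - h ξ) ^ 2) / (4 * t)) / (4 * Real.pi * t) *
            (σ ξ * Real.sqrt (1 + (deriv h ξ) ^ 2)))
          - σ 0 * (Real.exp (-a ^ 2 / (4 * t)) / (2 * Real.sqrt (Real.pi * t))))
      from (integral_sub hAint hBint).symm]
  have hb := MeasureTheory.norm_integral_le_of_norm_le hbound_int hkey'
  rw [Real.norm_eq_abs] at hb
  refine hb.trans ?_
  -- compute the bound integral
  have hrpow : (∫ t in Ioc (0:ℝ) δ, t ^ (-(1/2) : ℝ)) = 2 * Real.sqrt δ := by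
    rw [← intervalIntegral.integral_of_le hδ.le,
      integral_rpow (Or.inl (by norm_num : (-1:ℝ) < -(1/2)))]
    rw [show (-(1/2) : ℝ) + 1 = 1/2 by norm_num,
      Real.zero_rpow (by norm_num : (1/2 : ℝ) ≠ 0), ← Real.sqrt_eq_rpow]
    ring
  have hbval : (∫ t in Ioc (0:ℝ) δ, (E₁ + E₂ * a * t ^ (-(1/2) : ℝ)))
      = E₁ * δ + E₂ * a * (2 * Real.sqrt δ) := by
    rw [integral_add (integrableOn_const (C := E₁)
        (by rw [Real.volume_Ioc]; exact ENNReal.ofReal_ne_top))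
      (by
        have hr := intervalIntegral.intervalIntegrable_rpow'
          (show (-1:ℝ) < -(1/2) by norm_num) (a := (0:ℝ)) (b := δ)
        rw [intervalIntegrable_iff_integrableOn_Ioc_of_le hδ.le] at hr
        exact hr.const_mul _),
      integral_const_mul, hrpow, setIntegral_const]
    rw [measureReal_def, Real.volume_Ioc, smul_eq_mul, sub_zero, ENNReal.toReal_ofReal hδ.le]
    ring
  rw [hbval, ha_def]
  have hss : Real.sqrt δ * Real.sqrt δ = δ := Real.mul_self_sqrt hδ.le
  have hfin : E₂ * (c * Real.sqrt δ) * (2 * Real.sqrt δ) = 2 * E₂ * c * δ := by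
    linear_combination (2 * E₂ * c) * hss
  rw [hfin]
  nlinarith [hδ, hE₁0, hE₂0, hc]
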